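/- Let X be an EFX allocation (possibly partial) of a non-degenerate fair division instance such that the envy graph E_X contains a directed cycle. Then there exists another EFX allocation Y (allocating the same goods) such that Y Pareto dominates X. -/

import Mathlib

/-- A (possibly partial) allocation: bundles of distinct agents are pairwise disjoint. -/
def IsAlloc {N M : Type*} [DecidableEq M] (X : N → Finset M) : Prop :=
  ∀ i j : N, i ≠ j → Disjoint (X i) (X j)

/-- A good is unallocated if it belongs to no agent's bundle. -/
def Unallocated {N M : Type*} (X : N → Finset M) (g : M) : Prop :=
  ∀ i, g ∉ X i

/-- Agent `i` envies agent `j` under allocation `X`. -/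
def Envies {N M : Type*} (v : N → Finset M → ℝ) (X : N → Finset M) (i j : N) : Prop :=
  v i (X i) < v i (X j)

/-- Agent `i` envies a bundle `S` under allocation `X`. -/
def EnviesSet {N M : Type*} (v : N → Finset M → ℝ) (X : N → Finset M) (i : N)
    (S : Finset M) : Prop :=
  v i (X i) < v i S

/-- Agent `i` strongly envies agent `j`: removing some good of `X j` still leaves
a bundle that `i` prefers to her own. -/
def StrongEnvies {N M : Type*} [DecidableEq M] (v : N → Finset M → ℝ)
    (X : N → Finset M) (i j : N) : Prop :=
  ∃ g ∈ X j, v i (X i) < v i (X j \ {g})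

/-- An allocation is EFX if no agent strongly envies another. -/
def EFX {N M : Type*} [DecidableEq M] (v : N → Finset M → ℝ) (X : N → Finset M) : Prop :=
  ∀ i j : N, ¬ StrongEnvies v X i j

/-- `Y` Pareto dominates `X`. -/
def ParetoDom {N M : Type*} (v : N → Finset M → ℝ) (Y X : N → Finset M) : Prop :=
  (∀ i, v i (X i) ≤ v i (Y i)) ∧ ∃ j, v j (X j) < v j (Y j)

/-- `T` is a minimally envied subset of `S` with respect to the reference bundle `R`
for agent `i`: a minimum-cardinality subset of `S` that `i` values above `R`. -/
def IsMES {N M : Type*} (v : N → Finset M → ℝ) (i : N) (S R T : Finset M) : Prop :=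
  T ⊆ S ∧ v i R < v i T ∧ ∀ T' ⊆ S, v i R < v i T' → T.card ≤ T'.card

/-- Agent `i` champions the bundle `S`: `i` envies `S` and, among all agents envying `S`,
`i` has a minimally envied subset of minimum cardinality. -/
def Champions {N M : Type*} [DecidableEq M] (v : N → Finset M → ℝ) (X : N → Finset M)
    (i : N) (S : Finset M) : Prop :=
  EnviesSet v X i S ∧
    ∃ T, IsMES v i S (X i) T ∧
      ∀ j T', EnviesSet v X j S → IsMES v j S (X j) T' → T.card ≤ T'.card

/-- Agent `i` `g`-champions agent `j` if `i` champions `X j ∪ {g}`. -/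
def GChampions {N M : Type*} [DecidableEq M] (v : N → Finset M → ℝ) (X : N → Finset M)
    (g : M) (i j : N) : Prop :=
  Champions v X i (insert g (X j))

/-- Non-degenerate instance: no agent values two distinct bundles equally. -/
def NonDeg {N M : Type*} (v : N → Finset M → ℝ) : Prop :=
  ∀ i : N, ∀ S T : Finset M, S ≠ T → v i S ≠ v i T

/-!
Rotating the bundles along simple envy cycles hands every agent on a cycle the bundle
she envied and leaves everybody else alone. No agent ends up worse off, so strong envy
for some bundle after the rotation would already have been strong envy for the same
bundle under `X`.
-/

open Function Set Relation

theorem Function.exists_iterate_mem_periodicPts {α : Type*} [Finite α] (f : α → α) (x : α) :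
    ∃ n, f^[n] x ∈ periodicPts f := by
  obtain ⟨m, n, hmn, heq⟩ := Finite.exists_ne_map_eq_of_infinite (f^[·] x)
  wlog hlt : m < n generalizing m n
  · exact this n m hmn.symm heq.symm (by omega)
  refine ⟨m, mk_mem_periodicPts (Nat.sub_pos_of_lt hlt) ?_⟩
  change f^[n - m] (f^[m] x) = f^[m] x
  rw [← iterate_add_apply, Nat.sub_add_cancel hlt.le]
  exact heq.symm

theorem Relation.TransGen.exists_injective_rel {α : Type*} [Finite α] {R : α → α → Prop}
    {a : α} (h : TransGen R a a) :
    ∃ σ : α → α, Injective σ ∧ (∀ x, σ x = x ∨ R x (σ x)) ∧ ∃ x, R x (σ x) := by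
  classical
  set C := {x | TransGen R x x}
  have hstep : ∀ x ∈ C, ∃ y ∈ C, R x y := by
    intro x hx
    obtain ⟨y, hxy, hyx⟩ := TransGen.head'_iff.mp hx
    exact ⟨y, TransGen.tail' hyx hxy, hxy⟩
  choose! s hsC hsR using hstep
  -- `f` follows a chosen `R`-edge on points lying on closed walks; being a bijection of its
  -- own periodic points, it gives the required `σ` there (the identity elsewhere).
  set f : α → α := fun x => if x ∈ C then s x else x
  have hfC : MapsTo f C C := fun x hx => by simpa [f, hx] using hsC x hx
  obtain ⟨n, hn⟩ := exists_iterate_mem_periodicPts f a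
  set σ : α → α := fun x => if x ∈ periodicPts f then f x else x
  have hper := bijOn_periodicPts f
  refine ⟨σ, ?_, ?_, f^[n] a, ?_⟩
  · intro x y hxy
    by_cases hx : x ∈ periodicPts f <;> by_cases hy : y ∈ periodicPts f <;>
      simp only [σ, hx, hy, if_true, if_false] at hxy
    · exact hper.injOn hx hy hxy
    · exact absurd (hxy ▸ hper.mapsTo hx) hy
    · exact absurd (hxy ▸ hper.mapsTo hy) hx
    · exact hxy
  · intro x
    by_cases hx : x ∈ periodicPts f
    · by_cases hxC : x ∈ C
      · simp [σ, f, hx, hxC, hsR x hxC]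
      · simp [σ, f, hx, hxC]
    · simp [σ, hx]
  · have haC : f^[n] a ∈ C := hfC.iterate n h
    simpa [σ, f, hn, haC] using hsR _ haC

section FairDivision

variable {N M : Type*} [DecidableEq M] {v : N → Finset M → ℝ} {X : N → Finset M}
  {σ : N → N}

theorem IsAlloc.comp_injective (hX : IsAlloc X) (hσ : Injective σ) : IsAlloc (X ∘ σ) :=
  fun _ _ hij => hX _ _ (hσ.ne hij)

theorem EFX.comp_of_le (hX : EFX v X) (hσ : ∀ i, v i (X i) ≤ v i (X (σ i))) :
    EFX v (X ∘ σ) :=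
  fun i j ⟨g, hg, hlt⟩ => hX i (σ j) ⟨g, hg, (hσ i).trans_lt hlt⟩

end FairDivision

theorem stmt2_general {N M : Type*} [Fintype N] [DecidableEq M]
    (v : N → Finset M → ℝ)
    (X : N → Finset M) (hX : IsAlloc X) (hEFX : EFX v X)
    (hcyc : ∃ i : N, Relation.TransGen (Envies v X) i i) :
    ∃ Y : N → Finset M, IsAlloc Y ∧
      Finset.univ.biUnion Y = Finset.univ.biUnion X ∧
      EFX v Y ∧ ParetoDom v Y X := by
  obtain ⟨i, hi⟩ := hcyc
  obtain ⟨σ, hσ, hmove, j, hj⟩ := hi.exists_injective_rel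
  have hle : ∀ i, v i (X i) ≤ v i (X (σ i)) := fun i => by
    rcases hmove i with h | h
    · rw [h]
    · exact h.le
  refine ⟨X ∘ σ, hX.comp_injective hσ, ?_, hEFX.comp_of_le hle, hle, j, hj⟩
  ext g
  simp only [Finset.mem_biUnion, Finset.mem_univ, true_and, comp_apply]
  exact (Finite.surjective_of_injective hσ).exists (p := (g ∈ X ·)) |>.symm

/-- If the envy graph of an EFX allocation `X` has a directed
cycle, then some EFX allocation `Y` of the same goods Pareto dominates `X`. -/
theorem stmt2 {N M : Type*} [Fintype N] [Fintype M] [DecidableEq M]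
    (v : N → Finset M → ℝ) (hv0 : ∀ i, v i (∅ : Finset M) = 0)
    (hnd : NonDeg v)
    (X : N → Finset M) (hX : IsAlloc X) (hEFX : EFX v X)
    (hcyc : ∃ i : N, Relation.TransGen (Envies v X) i i) :
    ∃ Y : N → Finset M, IsAlloc Y ∧
      Finset.univ.biUnion Y = Finset.univ.biUnion X ∧
      EFX v Y ∧ ParetoDom v Y X :=
  stmt2_general v X hX hEFX hcyc
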